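/- For q ∈ K with q ≠ 0 and q ≠ 1, the map X ↦ x/(q-1), Y ↦ y, T ↦ t - xy extends to a K-algebra isomorphism from the Gaddis algebra GH_{1,q} (relations YX - qXY = T, XT = TX, YT = TY) to the generalized Heisenberg algebra H(qt) (relations tx = qxt, yt = qty, yx - xy = (q-1)t). -/

import Mathlib

/-!
Both algebras are given by generators and relations, so each map is defined on generators and
checked on the relations. The inverse `x ↦ (q - 1) X`, `y ↦ Y`, `t ↦ T + (q - 1) X Y` makes sense
for every `q`; only the forward map divides by `q - 1`. Both composites fix the generators.
-/

noncomputable section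

open FreeAlgebra Polynomial

variable (K : Type) [Field K]

/-- Relations of `GH_{p,q}`. T = ι 0, X = ι 1, Y = ι 2. -/
inductive ghpqRel (p q : K) : FreeAlgebra K (Fin 3) → FreeAlgebra K (Fin 3) → Prop
  | r1 : ghpqRel p q (ι K (2 : Fin 3) * ι K (1 : Fin 3) - q • (ι K (1 : Fin 3) * ι K (2 : Fin 3)))
      (ι K (0 : Fin 3))
  | r2 : ghpqRel p q (ι K (1 : Fin 3) * ι K (0 : Fin 3)) (p • (ι K (0 : Fin 3) * ι K (1 : Fin 3)))
  | r3 : ghpqRel p q (ι K (2 : Fin 3) * ι K (0 : Fin 3)) (p⁻¹ • (ι K (0 : Fin 3) * ι K (2 : Fin 3)))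

/-- The Gaddis two-parameter quantum Heisenberg algebra. -/
abbrev GHpq (p q : K) := RingQuot (ghpqRel K p q)

/-- Generators of `GH_{p,q}`. -/
def ghpqGen (p q : K) (i : Fin 3) : GHpq K p q :=
  RingQuot.mkAlgHom K (ghpqRel K p q) (ι K i)

/-- Relations of the generalized Heisenberg algebra `H(f)`. t = ι 0, x = ι 1, y = ι 2. -/
inductive ghaRel (f : Polynomial K) : FreeAlgebra K (Fin 3) → FreeAlgebra K (Fin 3) → Prop
  | r1 : ghaRel f (ι K (0 : Fin 3) * ι K (1 : Fin 3))
      (ι K (1 : Fin 3) * Polynomial.aeval (ι K (0 : Fin 3)) f)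
  | r2 : ghaRel f (ι K (2 : Fin 3) * ι K (0 : Fin 3))
      (Polynomial.aeval (ι K (0 : Fin 3)) f * ι K (2 : Fin 3))
  | r3 : ghaRel f (ι K (2 : Fin 3) * ι K (1 : Fin 3) - ι K (1 : Fin 3) * ι K (2 : Fin 3))
      (Polynomial.aeval (ι K (0 : Fin 3)) f - ι K (0 : Fin 3))

/-- The generalized Heisenberg algebra `H(f)`. -/
abbrev GHA (f : Polynomial K) := RingQuot (ghaRel K f)

/-- Generators of `H(f)`. -/
def ghaGen (f : Polynomial K) (i : Fin 3) : GHA K f :=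
  RingQuot.mkAlgHom K (ghaRel K f) (ι K i)

namespace GHpq

variable {K} {p q : K}

local notation "𝐓" => ghpqGen K p q 0
local notation "𝐗" => ghpqGen K p q 1
local notation "𝐘" => ghpqGen K p q 2

theorem Y_mul_X_sub : 𝐘 * 𝐗 - q • (𝐗 * 𝐘) = 𝐓 := by
  simpa only [ghpqGen, map_sub, map_mul, map_smul] using
    RingQuot.mkAlgHom_rel K (ghpqRel.r1 (p := p) (q := q))

theorem X_mul_T : 𝐗 * 𝐓 = p • (𝐓 * 𝐗) := by
  simpa only [ghpqGen, map_mul, map_smul] using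
    RingQuot.mkAlgHom_rel K (ghpqRel.r2 (p := p) (q := q))

theorem Y_mul_T : 𝐘 * 𝐓 = p⁻¹ • (𝐓 * 𝐘) := by
  simpa only [ghpqGen, map_mul, map_smul] using
    RingQuot.mkAlgHom_rel K (ghpqRel.r3 (p := p) (q := q))

variable {A : Type*} [Ring A] [Algebra K A]

def lift (t x y : A) (h₁ : y * x - q • (x * y) = t) (h₂ : x * t = p • (t * x))
    (h₃ : y * t = p⁻¹ • (t * y)) : GHpq K p q →ₐ[K] A :=
  RingQuot.liftAlgHom K ⟨FreeAlgebra.lift K ![t, x, y], by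
    rintro _ _ ⟨⟩ <;> simpa only [map_sub, map_mul, map_smul, FreeAlgebra.lift_ι_apply] using ‹_›⟩

theorem lift_ghpqGen (t x y : A) (h₁ h₂ h₃) (i : Fin 3) :
    lift (p := p) (q := q) t x y h₁ h₂ h₃ (ghpqGen K p q i) = ![t, x, y] i :=
  (RingQuot.liftAlgHom_mkAlgHom_apply ..).trans (FreeAlgebra.lift_ι_apply ..)

theorem algHom_ext {φ ψ : GHpq K p q →ₐ[K] A}
    (h : ∀ i, φ (ghpqGen K p q i) = ψ (ghpqGen K p q i)) : φ = ψ :=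
  RingQuot.ringQuot_ext' K _ _ (FreeAlgebra.hom_ext (funext h))

end GHpq

namespace GHA

variable {K} {f : K[X]}

local notation "𝐭" => ghaGen K f 0
local notation "𝐱" => ghaGen K f 1
local notation "𝐲" => ghaGen K f 2

theorem t_mul_x : 𝐭 * 𝐱 = 𝐱 * aeval 𝐭 f := by
  simpa only [ghaGen, map_mul, aeval_algHom_apply] using
    RingQuot.mkAlgHom_rel K (ghaRel.r1 (f := f))

theorem y_mul_t : 𝐲 * 𝐭 = aeval 𝐭 f * 𝐲 := by
  simpa only [ghaGen, map_mul, aeval_algHom_apply] using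
    RingQuot.mkAlgHom_rel K (ghaRel.r2 (f := f))

theorem y_mul_x_sub : 𝐲 * 𝐱 - 𝐱 * 𝐲 = aeval 𝐭 f - 𝐭 := by
  simpa only [ghaGen, map_sub, map_mul, aeval_algHom_apply] using
    RingQuot.mkAlgHom_rel K (ghaRel.r3 (f := f))

variable {A : Type*} [Ring A] [Algebra K A]

def lift (t x y : A) (h₁ : t * x = x * aeval t f) (h₂ : y * t = aeval t f * y)
    (h₃ : y * x - x * y = aeval t f - t) : GHA K f →ₐ[K] A :=
  RingQuot.liftAlgHom K ⟨FreeAlgebra.lift K ![t, x, y], by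
    rintro _ _ ⟨⟩ <;>
      simpa only [map_sub, map_mul, ← aeval_algHom_apply, FreeAlgebra.lift_ι_apply] using ‹_›⟩

theorem lift_ghaGen (t x y : A) (h₁ h₂ h₃) (i : Fin 3) :
    lift (f := f) t x y h₁ h₂ h₃ (ghaGen K f i) = ![t, x, y] i :=
  (RingQuot.liftAlgHom_mkAlgHom_apply ..).trans (FreeAlgebra.lift_ι_apply ..)

theorem algHom_ext {φ ψ : GHA K f →ₐ[K] A}
    (h : ∀ i, φ (ghaGen K f i) = ψ (ghaGen K f i)) : φ = ψ :=
  RingQuot.ringQuot_ext' K _ _ (FreeAlgebra.hom_ext (funext h))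

end GHA

theorem Polynomial.aeval_C_mul_X {K A : Type*} [CommSemiring K] [Semiring A] [Algebra K A]
    (q : K) (a : A) :
    aeval a (C q * X) = q • a := by
  rw [aeval_mul, aeval_C, aeval_X, Algebra.smul_def]

section Isomorphism

variable {K} (q : K)

local notation "𝐭" => ghaGen K (C q * X) 0
local notation "𝐱" => ghaGen K (C q * X) 1
local notation "𝐲" => ghaGen K (C q * X) 2
local notation "𝐓" => ghpqGen K 1 q 0
local notation "𝐗" => ghpqGen K 1 q 1
local notation "𝐘" => ghpqGen K 1 q 2

theorem GHA.t_mul_x_of_qt : 𝐭 * 𝐱 = q • (𝐱 * 𝐭) := by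
  rw [GHA.t_mul_x, aeval_C_mul_X, mul_smul_comm]

theorem GHA.y_mul_t_of_qt : 𝐲 * 𝐭 = q • (𝐭 * 𝐲) := by
  rw [GHA.y_mul_t, aeval_C_mul_X, smul_mul_assoc]

theorem GHA.y_mul_x_of_qt : 𝐲 * 𝐱 = 𝐱 * 𝐲 + (q - 1) • 𝐭 := by
  rw [← sub_eq_iff_eq_add', GHA.y_mul_x_sub, aeval_C_mul_X]
  module

theorem GHpq.Y_mul_X_of_p_one : 𝐘 * 𝐗 = q • (𝐗 * 𝐘) + 𝐓 := by
  rw [← sub_eq_iff_eq_add', GHpq.Y_mul_X_sub]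

theorem GHpq.X_mul_T_of_p_one : 𝐗 * 𝐓 = 𝐓 * 𝐗 := by
  rw [GHpq.X_mul_T, one_smul]

theorem GHpq.Y_mul_T_of_p_one : 𝐘 * 𝐓 = 𝐓 * 𝐘 := by
  rw [GHpq.Y_mul_T, inv_one, one_smul]

def ghaToGHpq : GHA K (C q * X) →ₐ[K] GHpq K 1 q :=
  GHA.lift (𝐓 + (q - 1) • (𝐗 * 𝐘)) ((q - 1) • 𝐗) 𝐘
    (by
      simp only [aeval_C_mul_X, add_mul, mul_add, smul_mul_assoc, mul_smul_comm, smul_add,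
        smul_smul, mul_assoc, GHpq.Y_mul_X_of_p_one, GHpq.X_mul_T_of_p_one]
      module)
    (by
      simp only [aeval_C_mul_X, add_mul, mul_add, smul_mul_assoc, mul_smul_comm, smul_add,
        smul_smul, ← mul_assoc, GHpq.Y_mul_X_of_p_one, GHpq.Y_mul_T_of_p_one]
      module)
    (by
      simp only [aeval_C_mul_X, smul_mul_assoc, mul_smul_comm, GHpq.Y_mul_X_of_p_one]
      module)

theorem ghaToGHpq_ghaGen (i : Fin 3) :
    ghaToGHpq q (ghaGen K (C q * X) i) = ![𝐓 + (q - 1) • (𝐗 * 𝐘), (q - 1) • 𝐗, 𝐘] i :=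
  GHA.lift_ghaGen ..

variable {q} (hq : q ≠ 1)

def ghpqToGHA : GHpq K 1 q →ₐ[K] GHA K (C q * X) :=
  GHpq.lift (𝐭 - 𝐱 * 𝐲) ((q - 1)⁻¹ • 𝐱) 𝐲
    (by
      have key : 𝐲 * 𝐱 - q • (𝐱 * 𝐲) = (q - 1) • (𝐭 - 𝐱 * 𝐲) := by
        rw [GHA.y_mul_x_of_qt]
        module
      calc 𝐲 * (q - 1)⁻¹ • 𝐱 - q • ((q - 1)⁻¹ • 𝐱 * 𝐲)
          = (q - 1)⁻¹ • (𝐲 * 𝐱 - q • (𝐱 * 𝐲)) := by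
            rw [mul_smul_comm, smul_mul_assoc]
            module
        _ = 𝐭 - 𝐱 * 𝐲 := by rw [key, inv_smul_smul₀ (sub_ne_zero.mpr hq)])
    (by
      rw [smul_mul_assoc, mul_smul_comm, one_smul]
      congr 1
      rw [mul_sub, sub_mul, GHA.t_mul_x_of_qt, mul_assoc 𝐱 𝐲 𝐱, GHA.y_mul_x_of_qt, mul_add,
        mul_smul_comm]
      module)
    (by
      rw [mul_sub, sub_mul, GHA.y_mul_t_of_qt, ← mul_assoc 𝐲 𝐱 𝐲, GHA.y_mul_x_of_qt, add_mul,
        smul_mul_assoc, inv_one, one_smul]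
      module)

theorem ghpqToGHA_ghpqGen (i : Fin 3) :
    ghpqToGHA hq (ghpqGen K 1 q i) = ![𝐭 - 𝐱 * 𝐲, (q - 1)⁻¹ • 𝐱, 𝐲] i :=
  GHpq.lift_ghpqGen ..

theorem ghpqToGHA_comp_ghaToGHpq : (ghpqToGHA hq).comp (ghaToGHpq q) = AlgHom.id K _ :=
  GHA.algHom_ext fun i => by
    fin_cases i <;>
      simp [ghaToGHpq_ghaGen, ghpqToGHA_ghpqGen, smul_smul, sub_ne_zero.mpr hq]

theorem ghaToGHpq_comp_ghpqToGHA : (ghaToGHpq q).comp (ghpqToGHA hq) = AlgHom.id K _ :=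
  GHpq.algHom_ext fun i => by
    fin_cases i <;>
      simp [ghaToGHpq_ghaGen, ghpqToGHA_ghpqGen, smul_smul, sub_ne_zero.mpr hq]

def ghpqEquivGHA : GHpq K 1 q ≃ₐ[K] GHA K (C q * X) :=
  AlgEquiv.ofAlgHom _ _ (ghpqToGHA_comp_ghaToGHpq hq) (ghaToGHpq_comp_ghpqToGHA hq)

end Isomorphism

theorem stmt5 (q : K) (hq1 : q ≠ 1) :
    ∃ φ : GHpq K 1 q ≃ₐ[K] GHA K (C q * X),
      φ (ghpqGen K 1 q 1) = (q - 1)⁻¹ • ghaGen K (C q * X) 1 ∧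
      φ (ghpqGen K 1 q 2) = ghaGen K (C q * X) 2 ∧
      φ (ghpqGen K 1 q 0) =
        ghaGen K (C q * X) 0 - ghaGen K (C q * X) 1 * ghaGen K (C q * X) 2 :=
  ⟨ghpqEquivGHA hq1, ghpqToGHA_ghpqGen hq1 1, ghpqToGHA_ghpqGen hq1 2, ghpqToGHA_ghpqGen hq1 0⟩

end
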